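/- Let (G, H, Γ) be a cut-and-project scheme, with G and H each carrying a right-invariant, proper metric compatible with the topology, and let W ⊆ H be a nonempty, relatively compact, Γ-regular window with model set Λ := π_G((G × W) ∩ Γ). Then for every r > 0, the number of equivalence classes of the relation ∼_r on Λ is at most the number of connected components of W \ ⋃_{μ ∈ S_r} μ·∂W, where S_r := π_H({(γ, μ) ∈ Γ : |γ| < r, μ ∈ WW⁻¹}) is the r-slab. -/

import Mathlib

/-!
A point `l ∈ Λ` has a lift `(l, h) ∈ Γ` with `h ∈ W`, and by right invariance its translated
`r`-patch is the set of `g` with `(g, k) ∈ Γ`, `|g| < r` and `k h ∈ W`; so it depends only on `h`.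
Each such `k` has `k⁻¹` in the slab `S_r`, and `Γ`-regularity keeps `h` off every translate
`μ·∂W` with `μ ∈ S_r`. On `W' := W \ ⋃_{μ ∈ S_r} μ·∂W` the set `{x | k x ∈ W}` therefore has empty
frontier, hence is clopen, so the patch is constant on connected components of `W'`. Hence the
`∼_r`-class of a point of `Λ` is determined by the component of its internal coordinate.
-/

open Pointwise

universe u

variable {G H : Type u}

/-- The cut-and-project set `Λ = π_G((G × W) ∩ Γ)`. -/
def modelSet [Group G] [Group H] (Γ : Subgroup (G × H)) (W : Set H) : Set G :=
  Prod.fst '' ((Set.univ ×ˢ W) ∩ (Γ : Set (G × H)))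

/-- The `r`-slab `S_r = π_H({(γ, μ) ∈ Γ : |γ| < r, μ ∈ WW⁻¹})`. -/
def slab [Group G] [Group H] [MetricSpace G] (Γ : Subgroup (G × H)) (W : Set H)
    (r : ℝ) : Set H :=
  Prod.snd '' {p : G × H | p ∈ (Γ : Set (G × H)) ∧ dist p.1 1 < r ∧ p.2 ∈ W * W⁻¹}

/-- `l ∼_r m` iff `P_r(l)·l⁻¹ = P_r(m)·m⁻¹`, where `P_r(x) = B_r(x) ∩ Λ`. -/
def patchEquiv [Group G] [MetricSpace G] (Λ : Set G) (r : ℝ) (l m : G) : Prop :=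
  (Metric.ball l r ∩ Λ) * ({l⁻¹} : Set G) = (Metric.ball m r ∩ Λ) * ({m⁻¹} : Set G)

open Set Cardinal

theorem Cardinal.mk_range_le_of_factorsThrough {α : Type*} {β γ : Type u} {f : α → γ}
    {φ : α → β} (h : f.FactorsThrough φ) : #(range f) ≤ #β :=
  Cardinal.mk_le_of_injective (f := fun y : range f => φ y.2.choose) fun y z hyz =>
    Subtype.ext (y.2.choose_spec.symm.trans ((h hyz).trans z.2.choose_spec))

theorem IsClopen.preimage_of_forall_notMem_frontier {X Y : Type*} [TopologicalSpace X]
    [TopologicalSpace Y] {f : X → Y} (hf : Continuous f) {s : Set Y}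
    (hs : ∀ x, f x ∉ frontier s) : IsClopen (f ⁻¹' s) :=
  isClopen_iff_frontier_eq_empty.2 <| eq_empty_of_subset_empty fun x hx =>
    hs x (hf.frontier_preimage_subset s hx)

section ModelSet

variable [Group G] [Group H]

theorem mem_modelSet {Γ : Subgroup (G × H)} {W : Set H} {l : G} :
    l ∈ modelSet Γ W ↔ ∃ h ∈ W, (l, h) ∈ Γ := by
  simp [modelSet]

theorem setOf_patchEquiv_eq [MetricSpace G] {Λ : Set G} {r : ℝ} {l m : G}
    (hlm : patchEquiv Λ r l m) :
    {x | x ∈ Λ ∧ patchEquiv Λ r l x} = {x | x ∈ Λ ∧ patchEquiv Λ r m x} := by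
  simp only [patchEquiv] at hlm ⊢
  rw [hlm]

variable [MetricSpace G]

/-- The translated patch `P_r(l)·l⁻¹` of a point `l` of the model set with lift `(l, h) ∈ Γ`,
in terms of `h` alone. -/
def internalPatch (Γ : Subgroup (G × H)) (W : Set H) (r : ℝ) (h : H) : Set G :=
  {g | ∃ k : H, (g, k) ∈ Γ ∧ dist g 1 < r ∧ k * h ∈ W}

def slabCutWindow [TopologicalSpace H] (Γ : Subgroup (G × H)) (W : Set H) (r : ℝ) : Set H :=
  W \ ⋃ μ ∈ slab Γ W r, μ • frontier W

variable {Γ : Subgroup (G × H)} {W : Set H} {r : ℝ}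

theorem inv_mem_slab (hdist : ∀ x y g : G, dist (x * g) (y * g) = dist x y) {g : G} {k x : H}
    (hgk : (g, k) ∈ Γ) (hg : dist g 1 < r) (hx : x ∈ W) (hkx : k * x ∈ W) :
    k⁻¹ ∈ slab Γ W r := by
  have hg' : dist g⁻¹ 1 = dist g 1 := by
    simpa [dist_comm] using (hdist g⁻¹ 1 g).symm
  refine ⟨(g, k)⁻¹, ⟨inv_mem hgk, hg'.trans_lt hg, ?_⟩, rfl⟩
  exact ⟨x, hx, (k * x)⁻¹, inv_mem_inv.2 hkx, by simp⟩

theorem ball_inter_modelSet_mul_inv (hdist : ∀ x y g : G, dist (x * g) (y * g) = dist x y)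
    {l : G} {h : H} (hl : (l, h) ∈ Γ) :
    (Metric.ball l r ∩ modelSet Γ W) * {l⁻¹} = internalPatch Γ W r h := by
  ext g
  rw [mul_singleton]
  constructor
  · rintro ⟨m, ⟨hm, hmΛ⟩, rfl⟩
    obtain ⟨k, hk, hmk⟩ := mem_modelSet.1 hmΛ
    refine ⟨k * h⁻¹, mul_mem hmk (inv_mem hl), ?_, by simpa using hk⟩
    exact (hdist (m * l⁻¹) 1 l).symm.trans_lt (by simpa using hm)
  · rintro ⟨k, hgk, hg, hkh⟩
    refine ⟨g * l, ⟨?_, mem_modelSet.2 ⟨k * h, hkh, mul_mem hgk hl⟩⟩, by simp⟩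
    simpa only [Metric.mem_ball, one_mul] using (hdist g 1 l).trans_lt hg

variable [TopologicalSpace H]

theorem snd_mem_slabCutWindow (hreg : frontier W ∩ Prod.snd '' (Γ : Set (G × H)) = ∅)
    {p : G × H} (hp : p ∈ Γ) (hpW : p.2 ∈ W) : p.2 ∈ slabCutWindow Γ W r := by
  refine ⟨hpW, fun hmem => ?_⟩
  obtain ⟨_, ⟨q, ⟨hq, -, -⟩, rfl⟩, hpq⟩ := mem_iUnion₂.1 hmem
  rw [mem_smul_set_iff_inv_smul_mem] at hpq
  exact hreg.subset ⟨hpq, q⁻¹ * p, mul_mem (inv_mem hq) hp, rfl⟩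

variable [ContinuousMul H]

theorem isClopen_setOf_mul_mem {k : H} (hk : k⁻¹ ∈ slab Γ W r) :
    IsClopen {x : slabCutWindow Γ W r | k * (x : H) ∈ W} :=
  IsClopen.preimage_of_forall_notMem_frontier (continuous_const.mul continuous_subtype_val)
    fun x hx => x.2.2 <| mem_iUnion₂.2 ⟨k⁻¹, hk, by rwa [mem_smul_set_iff_inv_smul_mem, inv_inv]⟩

theorem internalPatch_subset_of_mk_eq (hdist : ∀ x y g : G, dist (x * g) (y * g) = dist x y)
    {x y : slabCutWindow Γ W r} (hxy : ConnectedComponents.mk x = ConnectedComponents.mk y) :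
    internalPatch Γ W r x ⊆ internalPatch Γ W r y := by
  rintro g ⟨k, hgk, hg, hkx⟩
  have hclopen := isClopen_setOf_mul_mem (inv_mem_slab hdist hgk hg x.2.1 hkx)
  have hy : y ∈ connectedComponent x :=
    ConnectedComponents.coe_eq_coe.1 hxy ▸ mem_connectedComponent
  exact ⟨k, hgk, hg, hclopen.connectedComponent_subset hkx hy⟩

theorem patchEquiv_of_mk_eq (hdist : ∀ x y g : G, dist (x * g) (y * g) = dist x y)
    {l m : G} {x y : slabCutWindow Γ W r} (hl : (l, (x : H)) ∈ Γ) (hm : (m, (y : H)) ∈ Γ)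
    (hxy : ConnectedComponents.mk x = ConnectedComponents.mk y) :
    patchEquiv (modelSet Γ W) r l m := by
  rw [patchEquiv, ball_inter_modelSet_mul_inv hdist hl, ball_inter_modelSet_mul_inv hdist hm]
  exact (internalPatch_subset_of_mk_eq hdist hxy).antisymm
    (internalPatch_subset_of_mk_eq hdist hxy.symm)

end ModelSet

theorem card_patch_classes_le_card_components_general
    [Group G] [MetricSpace G]
    [Group H] [MetricSpace H] [IsTopologicalGroup H]
    (hinvG : ∀ x y g : G, dist (x * g) (y * g) = dist x y)
    (Γ : Subgroup (G × H))
    (W : Set H)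
    (hWreg : frontier W ∩ (Prod.snd '' (Γ : Set (G × H))) = ∅)
    (r : ℝ) :
    Cardinal.mk ↥{A : Set G | ∃ l ∈ modelSet Γ W,
        A = {m : G | m ∈ modelSet Γ W ∧ patchEquiv (modelSet Γ W) r l m}}
      ≤ Cardinal.mk (ConnectedComponents ↥(W \ ⋃ μ ∈ slab Γ W r, μ • frontier W)) := by
  let Λ := modelSet Γ W
  let lifts := {p : G × H // p ∈ Γ ∧ p.2 ∈ W}
  let patchClass : lifts → Set G := fun p => {m | m ∈ Λ ∧ patchEquiv Λ r p.1.1 m}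
  let component : lifts → ConnectedComponents (slabCutWindow Γ W r) := fun p =>
    ConnectedComponents.mk ⟨p.1.2, snd_mem_slabCutWindow hWreg p.2.1 p.2.2⟩
  have hclasses : {A : Set G | ∃ l ∈ Λ, A = {m | m ∈ Λ ∧ patchEquiv Λ r l m}} ⊆
      range patchClass := by
    rintro A ⟨l, hl, rfl⟩
    obtain ⟨h, hW, hΓ⟩ := mem_modelSet.1 hl
    exact ⟨⟨(l, h), hΓ, hW⟩, rfl⟩
  have hfactor : patchClass.FactorsThrough component := fun p q hpq =>
    setOf_patchEquiv_eq (patchEquiv_of_mk_eq hinvG p.2.1 q.2.1 hpq)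
  exact (Cardinal.mk_le_mk_of_subset hclasses).trans
    (Cardinal.mk_range_le_of_factorsThrough hfactor)

/-- For a cut-and-project scheme `(G, H, Γ)` with nonempty, relatively
compact, `Γ`-regular window `W` and model set `Λ`: for every `r > 0` the number of equivalence
classes of `∼_r` on `Λ` is at most the number of connected components of
`W \ ⋃_{μ ∈ S_r} μ·∂W`. -/
theorem card_patch_classes_le_card_components
    [Group G] [MetricSpace G] [IsTopologicalGroup G] [ProperSpace G] [SecondCountableTopology G]
    [Group H] [MetricSpace H] [IsTopologicalGroup H] [ProperSpace H] [SecondCountableTopology H]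
    (hinvG : ∀ x y g : G, dist (x * g) (y * g) = dist x y)
    (hinvH : ∀ x y g : H, dist (x * g) (y * g) = dist x y)
    (Γ : Subgroup (G × H)) [DiscreteTopology Γ]
    (hcocompact : ∃ C : Set (G × H), IsCompact C ∧ C * (Γ : Set (G × H)) = Set.univ)
    (hinj : Set.InjOn Prod.fst (Γ : Set (G × H)))
    (hdense : Dense (Prod.snd '' (Γ : Set (G × H))))
    (W : Set H) (hWne : W.Nonempty) (hWrc : IsCompact (closure W))
    (hWreg : frontier W ∩ (Prod.snd '' (Γ : Set (G × H))) = ∅)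
    (r : ℝ) (hr : 0 < r) :
    Cardinal.mk ↥{A : Set G | ∃ l ∈ modelSet Γ W,
        A = {m : G | m ∈ modelSet Γ W ∧ patchEquiv (modelSet Γ W) r l m}}
      ≤ Cardinal.mk (ConnectedComponents ↥(W \ ⋃ μ ∈ slab Γ W r, μ • frontier W)) :=
  card_patch_classes_le_card_components_general hinvG Γ W hWreg r
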